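/- arXiv:1707.07234 — 4 statements merged into one kernel-verified Lean document; each statement's English description precedes it below -/
import Mathlib

section
/- For every positive integer k and every γ ∈ [0,1], H̃(γ, 1/k) = (1/k)·[log₂(k+1) − ψ*_{U_k}(kγ)·log₂ e], where U_k is uniform on {0,1,…,k}, ψ_{U_k}(λ) = ln E[e^{λ U_k}] = ln((1/(k+1))·Σ_{i=0}^k e^{iλ}) is its log-moment generating function (natural logarithm), and ψ*_{U_k}(x) = sup_{λ∈ℝ} { λx − ψ_{U_k}(λ) } is its Legendre–Fenchel transform. -/
/-- Shannon entropy (in bits) of a pmf on `{0,1,…,k}`, with the convention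
`0 · log₂ 0 = 0` (automatic since `Real.logb 2 0 = 0`). -/
noncomputable def shannonEntropy (k : ℕ) (p : ℕ → ℝ) : ℝ :=
  -∑ i ∈ Finset.range (k + 1), p i * Real.logb 2 (p i)

/-- `H̃(γ, 1/k)`: `(1/k)` times the supremum of the entropies of pmfs on `{0,…,k}`
with mean `kγ`. -/
noncomputable def Htilde (k : ℕ) (γ : ℝ) : ℝ :=
  (1 / (k : ℝ)) * sSup { h : ℝ | ∃ p : ℕ → ℝ,
    (∀ i ∈ Finset.range (k + 1), 0 ≤ p i) ∧
    (∑ i ∈ Finset.range (k + 1), p i = 1) ∧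
    (∑ i ∈ Finset.range (k + 1), (i : ℝ) * p i = (k : ℝ) * γ) ∧
    h = shannonEntropy k p }

/-- Log-moment generating function (natural log) of the uniform distribution on `{0,…,k}`. -/
noncomputable def psiU (k : ℕ) (t : ℝ) : ℝ :=
  Real.log ((1 / ((k : ℝ) + 1)) * ∑ i ∈ Finset.range (k + 1), Real.exp ((i : ℝ) * t))

/-- Legendre–Fenchel transform `ψ*` of `psiU k`. -/
noncomputable def psiUStar (k : ℕ) (x : ℝ) : ℝ :=
  sSup { y : ℝ | ∃ t : ℝ, y = t * x - psiU k t }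

/-!
By Gibbs' inequality, a pmf `p` on `{0,…,k}` with mean `x` satisfies, for every `t`,
`H(p) ≤ log (k+1) - (t x - ψ(t))` (in nats), hence `H(p) ≤ log (k+1) - ψ*(x)`.
For `0 < x < k` this bound is attained: the mean of the tilted law `q_t(i) ∝ e^{i t}` moves
continuously from `0` (as `t → -∞`) to `k` (as `t → ∞`, by the reflection `i ↦ k - i`), so some
`q_t` has mean `x`, and tilted laws are exactly the equality case of Gibbs' inequality.
For `x ∈ {0, k}` the point mass has entropy `0`, and `ψ*(x) ≥ log (k+1)` because
`ψ(t) → -log (k+1)` as `t → -∞`.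
-/

open Real Finset Filter Topology

section Gibbs

variable {ι : Type*} (s : Finset ι)

lemma mul_log_sub_mul_log_le {p w : ℝ} (hp : 0 ≤ p) (hw : 0 < w) :
    p * log w - p * log p ≤ w - p := by
  rcases hp.eq_or_lt with rfl | hp
  · simpa using hw.le
  · have h := mul_le_mul_of_nonneg_left (log_le_sub_one_of_pos (div_pos hw hp)) hp.le
    rw [log_div hw.ne' hp.ne', show p * (w / p - 1) = w - p by field_simp] at h
    linarith

/-- Gibbs' variational inequality. -/
theorem sum_mul_add_sum_negMulLog_le {p f : ι → ℝ} (hp0 : ∀ i ∈ s, 0 ≤ p i)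
    (hp1 : ∑ i ∈ s, p i = 1) :
    ∑ i ∈ s, p i * f i + ∑ i ∈ s, negMulLog (p i) ≤ log (∑ i ∈ s, exp (f i)) := by
  have hs : s.Nonempty := nonempty_of_sum_ne_zero (by rw [hp1]; exact one_ne_zero)
  have hZ : 0 < ∑ i ∈ s, exp (f i) := sum_pos (fun i _ => exp_pos _) hs
  have h := sum_le_sum fun i hi =>
    mul_log_sub_mul_log_le (hp0 i hi) (div_pos (exp_pos (f i)) hZ)
  simp only [log_div (exp_ne_zero _) hZ.ne', log_exp, mul_sub, sum_sub_distrib, ← sum_div,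
    div_self hZ.ne', ← sum_mul, hp1] at h
  simp only [negMulLog, neg_mul, sum_neg_distrib]
  linarith

noncomputable def tilt (f : ι → ℝ) (i : ι) : ℝ := exp (f i) / ∑ j ∈ s, exp (f j)

variable {s}

lemma tilt_nonneg (f : ι → ℝ) (i : ι) : 0 ≤ tilt s f i := by
  unfold tilt; positivity

lemma sum_tilt (hs : s.Nonempty) (f : ι → ℝ) : ∑ i ∈ s, tilt s f i = 1 := by
  simp only [tilt]
  rw [← sum_div, div_self (sum_pos (fun i _ => exp_pos (f i)) hs).ne']

lemma sum_mul_add_sum_negMulLog_tilt (hs : s.Nonempty) (f : ι → ℝ) :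
    ∑ i ∈ s, tilt s f i * f i + ∑ i ∈ s, negMulLog (tilt s f i) = log (∑ i ∈ s, exp (f i)) := by
  have hZ : 0 < ∑ i ∈ s, exp (f i) := sum_pos (fun i _ => exp_pos (f i)) hs
  have hlog : ∀ i, log (tilt s f i) = f i - log (∑ j ∈ s, exp (f j)) := fun i => by
    rw [tilt, log_div (exp_ne_zero _) hZ.ne', log_exp]
  simp only [negMulLog, hlog, neg_mul, mul_sub, sum_sub_distrib, sum_neg_distrib, ← sum_mul,
    sum_tilt hs, one_mul]
  ring

end Gibbs

section UniformGrid

variable (k : ℕ)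

noncomputable def expSum (t : ℝ) : ℝ := ∑ i ∈ range (k + 1), exp (i * t)

noncomputable def tiltedMean (t : ℝ) : ℝ :=
  ∑ i ∈ range (k + 1), (i : ℝ) * tilt (range (k + 1)) (fun i : ℕ => (i : ℝ) * t) i

lemma expSum_pos (t : ℝ) : 0 < expSum k t :=
  sum_pos (fun _ _ => exp_pos _) nonempty_range_add_one

lemma psiU_eq_log_expSum_sub (t : ℝ) : psiU k t = log (expSum k t) - log (k + 1) := by
  rw [psiU, ← expSum, one_div, inv_mul_eq_div, log_div (expSum_pos k t).ne' (by positivity)]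

lemma expSum_eq_exp_mul_expSum_neg (t : ℝ) : expSum k t = exp (k * t) * expSum k (-t) := by
  rw [expSum, expSum, mul_sum, ← sum_range_reflect]
  refine sum_congr rfl fun i hi => ?_
  rw [← exp_add, Nat.add_sub_cancel, Nat.cast_sub (mem_range_succ_iff.1 hi)]
  ring_nf

lemma psiU_eq_mul_add_psiU_neg (t : ℝ) : psiU k t = k * t + psiU k (-t) := by
  rw [psiU_eq_log_expSum_sub, psiU_eq_log_expSum_sub, expSum_eq_exp_mul_expSum_neg,
    log_mul (exp_ne_zero _) (expSum_pos k _).ne', log_exp]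
  ring

lemma tilt_nat_mul (t : ℝ) (i : ℕ) :
    tilt (range (k + 1)) (fun i : ℕ => (i : ℝ) * t) i = exp (i * t) / expSum k t :=
  rfl

lemma tilt_neg_eq_tilt_reflect {i : ℕ} (hi : i ≤ k) (t : ℝ) :
    tilt (range (k + 1)) (fun i : ℕ => (i : ℝ) * -t) i
      = tilt (range (k + 1)) (fun i : ℕ => (i : ℝ) * t) (k - i) := by
  rw [tilt_nat_mul, tilt_nat_mul, expSum_eq_exp_mul_expSum_neg k t, Nat.cast_sub hi,
    div_mul_eq_div_div_swap, div_right_comm, ← exp_sub]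
  ring_nf

lemma tiltedMean_neg (t : ℝ) : tiltedMean k (-t) = k - tiltedMean k t := by
  let q := tilt (range (k + 1)) (fun i : ℕ => (i : ℝ) * t)
  calc tiltedMean k (-t) = ∑ i ∈ range (k + 1), (i : ℝ) * q (k - i) :=
        sum_congr rfl fun i hi => by rw [tilt_neg_eq_tilt_reflect k (mem_range_succ_iff.1 hi)]
    _ = ∑ j ∈ range (k + 1), ((k : ℝ) - j) * q j := by
        rw [← sum_range_reflect]
        refine sum_congr rfl fun j hj => ?_
        rw [Nat.add_sub_cancel, Nat.sub_sub_self (mem_range_succ_iff.1 hj),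
          Nat.cast_sub (mem_range_succ_iff.1 hj)]
    _ = k - tiltedMean k t := by
        simp only [sub_mul, sum_sub_distrib, ← mul_sum]
        rw [sum_tilt nonempty_range_add_one, mul_one]
        rfl

lemma tendsto_exp_nat_mul_atBot (i : ℕ) :
    Tendsto (fun t : ℝ => exp (i * t)) atBot (𝓝 (if i = 0 then 1 else 0)) := by
  rcases i.eq_zero_or_pos with rfl | hi
  · simp
  · rw [if_neg hi.ne']
    exact tendsto_exp_atBot.comp (tendsto_id.const_mul_atBot (Nat.cast_pos.2 hi))

lemma tendsto_expSum_atBot : Tendsto (expSum k) atBot (𝓝 1) := by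
  have h := tendsto_finsetSum (range (k + 1)) fun i _ => tendsto_exp_nat_mul_atBot i
  simp only [sum_ite_eq', mem_range, Nat.zero_lt_succ, ↓reduceIte] at h
  exact h

lemma tendsto_psiU_atBot : Tendsto (psiU k) atBot (𝓝 (-log (k + 1))) := by
  have h := ((tendsto_expSum_atBot k).log one_ne_zero).sub_const (log (k + 1))
  simpa [← psiU_eq_log_expSum_sub] using h

lemma tendsto_tiltedMean_atBot : Tendsto (tiltedMean k) atBot (𝓝 0) := by
  have h := tendsto_finsetSum (range (k + 1)) fun i _ =>
    ((tendsto_exp_nat_mul_atBot i).div (tendsto_expSum_atBot k) one_ne_zero).const_mul (i : ℝ)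
  simp only [Pi.div_apply, div_one, mul_ite, mul_zero, sum_ite_eq', mem_range,
    Nat.zero_lt_succ, ↓reduceIte, CharP.cast_eq_zero, zero_mul] at h
  exact h

lemma continuous_tiltedMean : Continuous (tiltedMean k) := by
  have hZ : Continuous (expSum k) := by unfold expSum; fun_prop
  unfold tiltedMean
  simp only [tilt_nat_mul]
  exact continuous_finsetSum _ fun i _ => continuous_const.mul <|
    Continuous.div (by fun_prop) hZ fun t => (expSum_pos k t).ne'

lemma exists_tiltedMean_eq {m : ℝ} (hm0 : 0 < m) (hmk : m < k) : ∃ t, tiltedMean k t = m := by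
  obtain ⟨a, ha⟩ := ((tendsto_tiltedMean_atBot k).eventually (gt_mem_nhds hm0)).exists
  obtain ⟨b, hb⟩ :=
    ((tendsto_tiltedMean_atBot k).eventually (gt_mem_nhds (sub_pos.2 hmk))).exists
  exact mem_range_of_exists_le_of_exists_ge (continuous_tiltedMean k) ⟨a, ha.le⟩
    ⟨-b, by rw [tiltedMean_neg]; linarith⟩

end UniformGrid

section LegendreTransform

variable (k : ℕ) {x : ℝ}

lemma mul_sub_psiU_le_log (hx : x ∈ Set.Icc 0 (k : ℝ)) (t : ℝ) :
    t * x - psiU k t ≤ log (k + 1) := by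
  suffices t * x ≤ log (expSum k t) by rw [psiU_eq_log_expSum_sub]; linarith
  have hle : ∀ j ∈ range (k + 1), log (exp (j * t)) ≤ log (expSum k t) := fun j hj =>
    log_le_log (exp_pos _) <|
      single_le_sum (f := fun i : ℕ => exp (i * t)) (fun i _ => (exp_pos _).le) hj
  rcases le_total 0 t with ht | ht
  · calc t * x ≤ k * t := by nlinarith [hx.2]
      _ ≤ log (expSum k t) := by simpa using hle k (self_mem_range_succ k)
  · calc t * x ≤ 0 := mul_nonpos_of_nonpos_of_nonneg ht hx.1
      _ ≤ log (expSum k t) := by simpa using hle 0 (by simp)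

lemma mul_sub_psiU_le_psiUStar (hx : x ∈ Set.Icc 0 (k : ℝ)) (t : ℝ) :
    t * x - psiU k t ≤ psiUStar k x :=
  le_csSup ⟨_, by rintro _ ⟨s, rfl⟩; exact mul_sub_psiU_le_log k hx s⟩ ⟨t, rfl⟩

lemma log_le_psiUStar_zero : log (k + 1) ≤ psiUStar k 0 := by
  refine le_of_tendsto' (by simpa using (tendsto_psiU_atBot k).neg) fun t => ?_
  simpa using mul_sub_psiU_le_psiUStar k ⟨le_rfl, k.cast_nonneg⟩ t

lemma log_le_psiUStar_self : log (k + 1) ≤ psiUStar k k := by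
  refine le_of_tendsto' (by simpa using (tendsto_psiU_atBot k).neg) fun t => ?_
  have h := mul_sub_psiU_le_psiUStar k ⟨k.cast_nonneg, le_rfl⟩ (-t)
  rw [psiU_eq_mul_add_psiU_neg k (-t), neg_neg] at h
  linarith

variable {k} {p : ℕ → ℝ}

lemma sum_negMulLog_le_log_sub_psiUStar (hp0 : ∀ i ∈ range (k + 1), 0 ≤ p i)
    (hp1 : ∑ i ∈ range (k + 1), p i = 1) (hpx : ∑ i ∈ range (k + 1), (i : ℝ) * p i = x) :
    ∑ i ∈ range (k + 1), negMulLog (p i) ≤ log (k + 1) - psiUStar k x := by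
  suffices psiUStar k x ≤ log (k + 1) - ∑ i ∈ range (k + 1), negMulLog (p i) by linarith
  refine csSup_le ⟨_, 0, rfl⟩ ?_
  rintro _ ⟨t, rfl⟩
  have h := sum_mul_add_sum_negMulLog_le (range (k + 1)) (f := fun i : ℕ => (i : ℝ) * t) hp0 hp1
  have hmean : ∑ i ∈ range (k + 1), p i * (i * t) = t * x := by
    rw [← hpx, mul_sum]
    exact sum_congr rfl fun i _ => by ring
  change _ ≤ log (expSum k t) at h
  rw [hmean] at h
  rw [psiU_eq_log_expSum_sub]
  linarith

end LegendreTransform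

section MaxEntropy

variable {k : ℕ} {x : ℝ}

lemma exists_pointMass {j : ℕ} (hj : j ≤ k) :
    ∃ p : ℕ → ℝ, (∀ i ∈ range (k + 1), 0 ≤ p i) ∧ ∑ i ∈ range (k + 1), p i = 1 ∧
      ∑ i ∈ range (k + 1), (i : ℝ) * p i = j ∧ ∑ i ∈ range (k + 1), negMulLog (p i) = 0 := by
  refine ⟨fun i => if i = j then 1 else 0, fun i _ => by positivity, ?_, ?_, ?_⟩ <;>
    simp [apply_ite negMulLog, Nat.lt_succ_iff.2 hj]

lemma exists_sum_negMulLog_ge (hx : x ∈ Set.Icc 0 (k : ℝ)) :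
    ∃ p : ℕ → ℝ, (∀ i ∈ range (k + 1), 0 ≤ p i) ∧ ∑ i ∈ range (k + 1), p i = 1 ∧
      ∑ i ∈ range (k + 1), (i : ℝ) * p i = x ∧
      log (k + 1) - psiUStar k x ≤ ∑ i ∈ range (k + 1), negMulLog (p i) := by
  rcases hx.1.eq_or_lt with rfl | hx0
  · obtain ⟨p, hp0, hp1, hpx, hH⟩ := exists_pointMass (Nat.zero_le k)
    exact ⟨p, hp0, hp1, by simpa using hpx, by linarith [log_le_psiUStar_zero k]⟩
  rcases hx.2.eq_or_lt with rfl | hxk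
  · obtain ⟨p, hp0, hp1, hpx, hH⟩ := exists_pointMass (le_refl k)
    exact ⟨p, hp0, hp1, hpx, by linarith [log_le_psiUStar_self k]⟩
  obtain ⟨t, rfl⟩ := exists_tiltedMean_eq k hx0 hxk
  have hH :=
    sum_mul_add_sum_negMulLog_tilt (nonempty_range_add_one (n := k)) (fun i : ℕ => (i : ℝ) * t)
  have hmean : ∑ i ∈ range (k + 1), tilt (range (k + 1)) (fun i : ℕ => (i : ℝ) * t) i * (i * t)
      = t * tiltedMean k t := by
    rw [tiltedMean, mul_sum]
    exact sum_congr rfl fun i _ => by ring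
  refine ⟨_, fun i _ => tilt_nonneg _ i, sum_tilt nonempty_range_add_one _, rfl, ?_⟩
  have := mul_sub_psiU_le_psiUStar k hx t
  rw [psiU_eq_log_expSum_sub] at this
  change _ = log (expSum k t) at hH
  rw [hmean] at hH
  linarith

end MaxEntropy

lemma shannonEntropy_eq_sum_negMulLog_div (k : ℕ) (p : ℕ → ℝ) :
    shannonEntropy k p = (∑ i ∈ range (k + 1), negMulLog (p i)) / log 2 := by
  simp only [shannonEntropy, logb, negMulLog, sum_div, ← sum_neg_distrib]
  exact sum_congr rfl fun i _ => by ring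

theorem Htilde_eq_logb_sub_rateFunction_general
    (k : ℕ) (γ : ℝ) (hγ : γ ∈ Set.Icc (0 : ℝ) 1) :
    Htilde k γ =
      (1 / (k : ℝ)) *
        (Real.logb 2 ((k : ℝ) + 1) -
          psiUStar k ((k : ℝ) * γ) * Real.logb 2 (Real.exp 1)) := by
  have hx : (k : ℝ) * γ ∈ Set.Icc 0 (k : ℝ) :=
    ⟨by have := hγ.1; positivity, mul_le_of_le_one_right k.cast_nonneg hγ.2⟩
  unfold Htilde
  rw [IsGreatest.csSup_eq (a := (log (k + 1) - psiUStar k (k * γ)) / log 2)]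
  · rw [logb, logb, log_exp]
    ring
  refine ⟨?_, ?_⟩
  · obtain ⟨p, hp0, hp1, hpx, hH⟩ := exists_sum_negMulLog_ge hx
    refine ⟨p, hp0, hp1, hpx, ?_⟩
    rw [shannonEntropy_eq_sum_negMulLog_div,
      le_antisymm (sum_negMulLog_le_log_sub_psiUStar hp0 hp1 hpx) hH]
  · rintro _ ⟨p, hp0, hp1, hpx, rfl⟩
    rw [shannonEntropy_eq_sum_negMulLog_div]
    gcongr
    exact sum_negMulLog_le_log_sub_psiUStar hp0 hp1 hpx

/-- For every positive integer `k` and `γ ∈ [0,1]`,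
`H̃(γ, 1/k) = (1/k)·[log₂(k+1) − ψ*_{U_k}(kγ)·log₂ e]`. -/
theorem Htilde_eq_logb_sub_rateFunction
    (k : ℕ) (hk : 0 < k) (γ : ℝ) (hγ : γ ∈ Set.Icc (0 : ℝ) 1) :
    Htilde k γ =
      (1 / (k : ℝ)) *
        (Real.logb 2 ((k : ℝ) + 1) -
          psiUStar k ((k : ℝ) * γ) * Real.logb 2 (Real.exp 1)) :=
  Htilde_eq_logb_sub_rateFunction_general k γ hγ
end

section
/- For every real λ ≠ 0, the function ĝ(x) = ln( (1 − e^{(x+1)λ}) / (1 − e^{λ}) ) is well defined (the argument of the logarithm is positive) and concave on [0, ∞). -/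
/-!
For `x ≥ 0` both `1 - exp ((x + 1) * λ)` and `1 - exp λ` have the sign of `-λ`, so the quotient
is positive. Writing `E = exp ((x + 1) * λ)`, the function has derivative `-λ E / (1 - E)` and
second derivative `-λ² E / (1 - E)²`, which is nonpositive.
-/

open Real Set

lemma one_sub_exp_mul_div_one_sub_exp_pos {c lam : ℝ} (hc : 0 < c) (hlam : lam ≠ 0) :
    0 < (1 - exp (c * lam)) / (1 - exp lam) := by
  rcases hlam.lt_or_gt with hneg | hpos
  · exact div_pos (sub_pos.2 (exp_lt_one_iff.2 (mul_neg_of_pos_of_neg hc hneg)))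
      (sub_pos.2 (exp_lt_one_iff.2 hneg))
  · exact div_pos_of_neg_of_neg (sub_neg.2 (one_lt_exp_iff.2 (mul_pos hc hpos)))
      (sub_neg.2 (one_lt_exp_iff.2 hpos))

lemma one_sub_exp_ne_zero {t : ℝ} (ht : t ≠ 0) : 1 - exp t ≠ 0 :=
  sub_ne_zero.2 fun h => ht ((exp_eq_one_iff t).1 h.symm)

lemma hasDerivAt_exp_add_one_mul (lam x : ℝ) :
    HasDerivAt (fun x => exp ((x + 1) * lam)) (lam * exp ((x + 1) * lam)) x := by
  simpa [mul_comm] using (((hasDerivAt_id x).add_const 1).mul_const lam).exp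

section Derivatives

variable {lam x : ℝ}

lemma hasDerivAt_log_one_sub_exp_div (hlam : lam ≠ 0) (hx : (x + 1) * lam ≠ 0) :
    HasDerivAt (fun x => log ((1 - exp ((x + 1) * lam)) / (1 - exp lam)))
      (-(lam * exp ((x + 1) * lam)) / (1 - exp ((x + 1) * lam))) x := by
  have h := (((hasDerivAt_exp_add_one_mul lam x).const_sub 1).div_const (1 - exp lam)).log
    (div_ne_zero (one_sub_exp_ne_zero hx) (one_sub_exp_ne_zero hlam))
  rwa [div_div_div_cancel_right₀ (one_sub_exp_ne_zero hlam)] at h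

lemma hasDerivAt_neg_mul_exp_div_one_sub_exp (hx : (x + 1) * lam ≠ 0) :
    HasDerivAt (fun x => -(lam * exp ((x + 1) * lam)) / (1 - exp ((x + 1) * lam)))
      (-(lam ^ 2 * exp ((x + 1) * lam)) / (1 - exp ((x + 1) * lam)) ^ 2) x := by
  have hE := hasDerivAt_exp_add_one_mul lam x
  have hnum : HasDerivAt (fun x => -(lam * exp ((x + 1) * lam)))
      (-(lam * (lam * exp ((x + 1) * lam)))) x := (hE.const_mul lam).neg
  refine (hnum.div (hE.const_sub 1) (one_sub_exp_ne_zero hx)).congr_deriv ?_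
  ring

end Derivatives

/-- For every real `λ ≠ 0`, the function
`ĝ(x) = ln((1 − e^{(x+1)λ}) / (1 − e^{λ}))` is well defined (the argument of the
logarithm is positive for `x ≥ 0`) and concave on `[0, ∞)`. -/
theorem ghat_wellDefined_and_concave (lam : ℝ) (hlam : lam ≠ 0) :
    (∀ x : ℝ, 0 ≤ x →
      0 < (1 - Real.exp ((x + 1) * lam)) / (1 - Real.exp lam)) ∧
    ConcaveOn ℝ (Set.Ici (0 : ℝ))
      (fun x : ℝ => Real.log ((1 - Real.exp ((x + 1) * lam)) / (1 - Real.exp lam))) := by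
  have harg : ∀ x : ℝ, 0 ≤ x → (x + 1) * lam ≠ 0 := fun x hx => mul_ne_zero (by linarith) hlam
  refine ⟨fun x hx => one_sub_exp_mul_div_one_sub_exp_pos (by linarith) hlam, ?_⟩
  have hderiv : ∀ x ∈ Ici (0 : ℝ), HasDerivAt
      (fun x => log ((1 - exp ((x + 1) * lam)) / (1 - exp lam)))
      (-(lam * exp ((x + 1) * lam)) / (1 - exp ((x + 1) * lam))) x :=
    fun x hx₀ => hasDerivAt_log_one_sub_exp_div hlam (harg x hx₀)
  refine concaveOn_of_hasDerivWithinAt2_nonpos (convex_Ici 0)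
    (fun x hx₀ => (hderiv x hx₀).continuousAt.continuousWithinAt)
    (fun x hx₀ => (hderiv x (interior_subset hx₀)).hasDerivWithinAt)
    (fun x hx₀ =>
      (hasDerivAt_neg_mul_exp_div_one_sub_exp (harg x (interior_subset hx₀))).hasDerivWithinAt)
    fun x _ => div_nonpos_of_nonpos_of_nonneg (neg_nonpos.2 (by positivity)) (sq_nonneg _)
end

section
/- Let n be a positive integer and let {μ_τ : τ = 1,…,n} ⊆ [0, 1/2] and nonnegative weights {π_τ : τ = 1,…,n} with Σ_{τ=1}^n π_τ = 1 satisfy Σ_{τ=1}^n π_τ·(μ_τ + 1/τ) = 1. Then there exist α ∈ [0,1] and γ₁, γ₂ ∈ [0, 1/2] such that α·(γ₁ + 1) + (1−α)·(γ₂ + 1/2) = 1 and Σ_{τ=1}^n π_τ·H̃(μ_τ, 1/τ) ≤ α·H̃(γ₁, 1) + (1−α)·H̃(γ₂, 1/2). -/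
/-- Gibbs' inequality against the geometric reference distribution. -/
lemma gibbs (k : ℕ) {x : ℝ} (hx : 0 < x) (p : ℕ → ℝ)
    (hp0 : ∀ i ∈ Finset.range (k+1), 0 ≤ p i)
    (hp1 : ∑ i ∈ Finset.range (k+1), p i = 1) :
    shannonEntropy k p ≤ Real.logb 2 (∑ i ∈ Finset.range (k+1), x^i)
      - (∑ i ∈ Finset.range (k+1), (i:ℝ) * p i) * Real.logb 2 x := by
  set Z : ℝ := ∑ i ∈ Finset.range (k+1), x^i with hZdef
  have hZpos : 0 < Z := by
    apply Finset.sum_pos (fun i _ => pow_pos hx i)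
    exact ⟨0, Finset.mem_range.2 (Nat.succ_pos k)⟩
  have key : ∀ i ∈ Finset.range (k+1),
      p i * Real.log (x^i / Z) - p i * Real.log (p i) ≤ x^i / Z - p i := by
    intro i hi
    rcases eq_or_lt_of_le (hp0 i hi) with h0 | hpi
    · simp [← h0]
      positivity
    · have hq : 0 < x^i / Z := div_pos (pow_pos hx i) hZpos
      have h1 : Real.log (x^i / Z / p i) ≤ x^i / Z / p i - 1 :=
        Real.log_le_sub_one_of_pos (div_pos hq hpi)
      have h2 : Real.log (x^i / Z / p i) = Real.log (x^i / Z) - Real.log (p i) :=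
        Real.log_div (ne_of_gt hq) (ne_of_gt hpi)
      rw [h2] at h1
      have h3 := mul_le_mul_of_nonneg_left h1 (le_of_lt hpi)
      have h4 : p i * (x^i / Z / p i - 1) = x^i / Z - p i := by
        field_simp
      rw [h4] at h3
      nlinarith
  have H := Finset.sum_le_sum key
  rw [Finset.sum_sub_distrib, Finset.sum_sub_distrib, hp1] at H
  have hq1 : ∑ i ∈ Finset.range (k+1), x^i / Z = 1 := by
    rw [← Finset.sum_div, ← hZdef, div_self (ne_of_gt hZpos)]
  rw [hq1] at H
  -- rewrite log of geometric term
  have hlogq : ∀ i ∈ Finset.range (k+1),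
      p i * Real.log (x^i / Z) = (i:ℝ) * p i * Real.log x - p i * Real.log Z := by
    intro i hi
    rw [Real.log_div (pow_ne_zero i (ne_of_gt hx)) (ne_of_gt hZpos), Real.log_pow]
    ring
  rw [Finset.sum_congr rfl hlogq, Finset.sum_sub_distrib] at H
  rw [← Finset.sum_mul, ← Finset.sum_mul, hp1, one_mul] at H
  -- H : (∑ i p i) * log x - log Z - ∑ p log p ≤ 0
  have hlog2 : 0 < Real.log 2 := Real.log_pos one_lt_two
  have hse : shannonEntropy k p = (-∑ i ∈ Finset.range (k+1), p i * Real.log (p i)) / Real.log 2 := by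
    unfold shannonEntropy
    simp only [Real.logb, neg_div, Finset.sum_div, mul_div_assoc]
  rw [hse]
  have hrhs : Real.logb 2 Z - (∑ i ∈ Finset.range (k+1), (i:ℝ) * p i) * Real.logb 2 x
      = (Real.log Z - (∑ i ∈ Finset.range (k+1), (i:ℝ) * p i) * Real.log x) / Real.log 2 := by
    rw [Real.logb, Real.logb]
    ring
  rw [hrhs]
  gcongr
  linarith [H]

lemma entropy_geom (k : ℕ) {x : ℝ} (hx : 0 < x) :
    shannonEntropy k (fun i => x^i / (∑ j ∈ Finset.range (k+1), x^j))
      = Real.logb 2 (∑ j ∈ Finset.range (k+1), x^j)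
        - (∑ i ∈ Finset.range (k+1), (i:ℝ) * (x^i / (∑ j ∈ Finset.range (k+1), x^j)))
          * Real.logb 2 x := by
  set Z : ℝ := ∑ j ∈ Finset.range (k+1), x^j with hZdef
  have hZpos : 0 < Z := by
    apply Finset.sum_pos (fun i _ => pow_pos hx i)
    exact ⟨0, Finset.mem_range.2 (Nat.succ_pos k)⟩
  have hq1 : ∑ i ∈ Finset.range (k+1), x^i / Z = 1 := by
    rw [← Finset.sum_div, ← hZdef, div_self (ne_of_gt hZpos)]
  unfold shannonEntropy
  have hterm : ∀ i ∈ Finset.range (k+1),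
      (x^i / Z) * Real.logb 2 (x^i / Z)
        = (i:ℝ) * (x^i / Z) * Real.logb 2 x - (x^i / Z) * Real.logb 2 Z := by
    intro i _
    rw [Real.logb_div (pow_ne_zero i (ne_of_gt hx)) (ne_of_gt hZpos), Real.logb_pow]
    ring
  rw [Finset.sum_congr rfl hterm, Finset.sum_sub_distrib, ← Finset.sum_mul,
    ← Finset.sum_mul, hq1, one_mul]
  ring

lemma keyZ (k : ℕ) (hk : 1 ≤ k) {x : ℝ} (hx7 : 0.7 ≤ x) (hx8 : x ≤ 0.8)
    (hxeq : x^3 + x^2 = 1) :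
    (∑ i ∈ Finset.range (k+1), x^i) * x^(k+1) ≤ 1 := by
  have hx0 : (0:ℝ) < x := by linarith
  have hx1 : x ≤ 1 := by linarith
  have h1x : (0:ℝ) < 1 - x := by linarith
  have hg : (∑ i ∈ Finset.range (k+1), x^i) * (x - 1) = x^(k+1) - 1 := geom_sum_mul x (k+1)
  set y : ℝ := x^(k+1) with hy
  have hy0 : 0 ≤ y := pow_nonneg (le_of_lt hx0) _
  -- suffices: y - y^2 ≤ 1 - x
  have hmain : y - y^2 ≤ 1 - x := by
    rcases eq_or_lt_of_le hk with h1 | h2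
    · -- k = 1 : y = x^2, equality
      have : y = x^2 := by rw [hy, ← h1]
      rw [this]; nlinarith [hxeq]
    · -- k ≥ 2 : y ≤ x^3 = 1 - x^2
      have hy3 : y ≤ x^3 := by
        rw [hy]
        exact pow_le_pow_of_le_one (le_of_lt hx0) hx1 (by omega)
      have hx32 : x^3 ≤ x^2 := by nlinarith
      have hf1 : 0 ≤ x^2 - y := by linarith
      have hf2 : 0 ≤ 1 - x^2 - y := by nlinarith [hxeq]
      nlinarith [mul_nonneg hf1 hf2, hxeq]
  -- convert
  have hexp : (∑ i ∈ Finset.range (k+1), x^i) * y * (1 - x) = y - y^2 := by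
    have : (∑ i ∈ Finset.range (k+1), x^i) * (1 - x) = 1 - y := by
      have := hg; nlinarith [hg]
    calc (∑ i ∈ Finset.range (k+1), x^i) * y * (1 - x)
        = ((∑ i ∈ Finset.range (k+1), x^i) * (1 - x)) * y := by ring
      _ = (1 - y) * y := by rw [this]
      _ = y - y^2 := by ring
  have : (∑ i ∈ Finset.range (k+1), x^i) * y * (1 - x) ≤ 1 * (1 - x) := by
    rw [hexp, one_mul]; linarith
  exact le_of_mul_le_mul_right (by linarith [this]) h1x

/-- Lower bound on Htilde via the geometric pmf. -/
lemma htilde_ge (k : ℕ) (hk : 0 < k) {x : ℝ} (hx : 0 < x) (γ : ℝ)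
    (hγ : (k:ℝ) * γ = ∑ i ∈ Finset.range (k+1),
        (i:ℝ) * (x^i / (∑ j ∈ Finset.range (k+1), x^j))) :
    (1 / (k:ℝ)) * (Real.logb 2 (∑ j ∈ Finset.range (k+1), x^j)
        - ((k:ℝ) * γ) * Real.logb 2 x) ≤ Htilde k γ := by
  set Z : ℝ := ∑ j ∈ Finset.range (k+1), x^j with hZdef
  have hZpos : 0 < Z := by
    apply Finset.sum_pos (fun i _ => pow_pos hx i)
    exact ⟨0, Finset.mem_range.2 (Nat.succ_pos k)⟩
  set S := { h : ℝ | ∃ p : ℕ → ℝ,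
    (∀ i ∈ Finset.range (k + 1), 0 ≤ p i) ∧
    (∑ i ∈ Finset.range (k + 1), p i = 1) ∧
    (∑ i ∈ Finset.range (k + 1), (i : ℝ) * p i = (k : ℝ) * γ) ∧
    h = shannonEntropy k p } with hSdef
  have hptr : ∀ i ∈ Finset.range (k+1), (0:ℝ) ≤ x^i / Z :=
    fun i _ => le_of_lt (div_pos (pow_pos hx i) hZpos)
  have hq1 : ∑ i ∈ Finset.range (k+1), x^i / Z = 1 := by
    rw [← Finset.sum_div, ← hZdef, div_self (ne_of_gt hZpos)]
  have hmem : Real.logb 2 Z - ((k:ℝ) * γ) * Real.logb 2 x ∈ S := by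
    refine ⟨fun i => x^i / Z, hptr, hq1, hγ.symm, ?_⟩
    rw [entropy_geom k hx, ← hZdef, ← hγ]
  have hbdd : BddAbove S := by
    refine ⟨Real.logb 2 Z + |(k:ℝ) * γ * Real.logb 2 x|, ?_⟩
    rintro h ⟨p, hp0, hp1, hpm, rfl⟩
    have := gibbs k hx p hp0 hp1
    rw [hpm] at this
    rw [← hZdef] at this
    calc shannonEntropy k p ≤ Real.logb 2 Z - (k:ℝ) * γ * Real.logb 2 x := this
      _ ≤ Real.logb 2 Z + |(k:ℝ) * γ * Real.logb 2 x| := by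
          have := neg_abs_le ((k:ℝ) * γ * Real.logb 2 x); linarith
  have hle := le_csSup hbdd hmem
  unfold Htilde
  rw [← hSdef]
  apply mul_le_mul_of_nonneg_left hle
  positivity

/-- Upper bound on Htilde. -/
lemma htilde_le (k : ℕ) (hk : 0 < k) (γ : ℝ) (hγ0 : 0 ≤ γ) (hγ1 : γ ≤ 1)
    {x : ℝ} (hx0 : 0 < x) (hx1 : x ≤ 1)
    (hxZ : (∑ i ∈ Finset.range (k+1), x^i) * x^(k+1) ≤ 1) :
    Htilde k γ ≤ (-Real.logb 2 x) * (γ + 1/(k:ℝ) + 1) := by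
  have hkR : (0:ℝ) < (k:ℝ) := Nat.cast_pos.2 hk
  set Z : ℝ := ∑ j ∈ Finset.range (k+1), x^j with hZdef
  have hZpos : 0 < Z := by
    apply Finset.sum_pos (fun i _ => pow_pos hx0 i)
    exact ⟨0, Finset.mem_range.2 (Nat.succ_pos k)⟩
  have hlogZ : Real.logb 2 Z ≤ ((k:ℝ) + 1) * (-Real.logb 2 x) := by
    have h1 : Real.logb 2 (Z * x^(k+1)) ≤ 0 := by
      apply Real.logb_nonpos one_lt_two
        (le_of_lt (mul_pos hZpos (pow_pos hx0 _)))
      exact hxZ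
    rw [Real.logb_mul (ne_of_gt hZpos) (pow_ne_zero _ (ne_of_gt hx0)),
      Real.logb_pow] at h1
    push_cast at h1 ⊢
    linarith
  set S := { h : ℝ | ∃ p : ℕ → ℝ,
    (∀ i ∈ Finset.range (k + 1), 0 ≤ p i) ∧
    (∑ i ∈ Finset.range (k + 1), p i = 1) ∧
    (∑ i ∈ Finset.range (k + 1), (i : ℝ) * p i = (k : ℝ) * γ) ∧
    h = shannonEntropy k p } with hSdef
  have hk1 : k ∈ Finset.range (k+1) := Finset.mem_range.2 (Nat.lt_succ_self k)
  have h01 : 0 ∈ Finset.range (k+1) := Finset.mem_range.2 (Nat.succ_pos k)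
  have hne : S.Nonempty := by
    refine ⟨_, ⟨fun i => (if i = 0 then 1 - γ else 0) + (if i = k then γ else 0),
      ?_, ?_, ?_, rfl⟩⟩
    · intro i hi
      dsimp only
      split_ifs <;> linarith
    · simp only [Finset.sum_add_distrib, Finset.sum_ite_eq', h01, hk1, if_true]
      ring
    · simp only [mul_add, mul_ite, mul_zero, Finset.sum_add_distrib,
        Finset.sum_ite_eq', h01, hk1, if_true]
      push_cast
      ring
  have hub : sSup S ≤ ((k:ℝ) + 1 + (k:ℝ)*γ) * (-Real.logb 2 x) := by
    apply csSup_le hne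
    rintro h ⟨p, hp0, hp1, hpm, rfl⟩
    have hg := gibbs k hx0 p hp0 hp1
    rw [hpm, ← hZdef] at hg
    nlinarith [hlogZ]
  unfold Htilde
  rw [← hSdef]
  calc (1/(k:ℝ)) * sSup S
      ≤ (1/(k:ℝ)) * (((k:ℝ) + 1 + (k:ℝ)*γ) * (-Real.logb 2 x)) :=
        mul_le_mul_of_nonneg_left hub (by positivity)
    _ = (-Real.logb 2 x) * (γ + 1/(k:ℝ) + 1) := by
        have hkne : (k:ℝ) ≠ 0 := ne_of_gt hkR
        field_simp
        ring_nf

lemma exists_x : ∃ x : ℝ, 0.7 ≤ x ∧ x ≤ 0.8 ∧ x^3 + x^2 = 1 := by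
  have hc : ContinuousOn (fun x : ℝ => x^3 + x^2) (Set.Icc 0.7 0.8) := by fun_prop
  have h := intermediate_value_Icc (by norm_num : (0.7:ℝ) ≤ 0.8) hc
  have h1 : (1:ℝ) ∈ Set.Icc ((0.7:ℝ)^3 + (0.7:ℝ)^2) ((0.8:ℝ)^3 + (0.8:ℝ)^2) := by
    norm_num
  obtain ⟨x, hx, hxe⟩ := h h1
  exact ⟨x, hx.1, hx.2, hxe⟩

/-- Any convex combination indexed by inter-arrival times
`τ = 1,…,n` with `μ_τ ∈ [0, 1/2]`, nonnegative weights `π_τ` summing to `1`, and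
`Σ_τ π_τ (μ_τ + 1/τ) = 1`, is dominated by a combination of just the two pairs
`(γ₁, 1)` and `(γ₂, 1/2)` on the same constraint line. -/
theorem two_interarrival_times_suffice
    (n : ℕ) (hn : 0 < n) (μ π : ℕ → ℝ)
    (hμ : ∀ τ ∈ Finset.Icc 1 n, μ τ ∈ Set.Icc (0 : ℝ) (1 / 2))
    (hπ : ∀ τ ∈ Finset.Icc 1 n, 0 ≤ π τ)
    (hπsum : ∑ τ ∈ Finset.Icc 1 n, π τ = 1)
    (hconstr : ∑ τ ∈ Finset.Icc 1 n, π τ * (μ τ + 1 / (τ : ℝ)) = 1) :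
    ∃ α γ₁ γ₂ : ℝ,
      α ∈ Set.Icc (0 : ℝ) 1 ∧
      γ₁ ∈ Set.Icc (0 : ℝ) (1 / 2) ∧
      γ₂ ∈ Set.Icc (0 : ℝ) (1 / 2) ∧
      α * (γ₁ + 1) + (1 - α) * (γ₂ + 1 / 2) = 1 ∧
      ∑ τ ∈ Finset.Icc 1 n, π τ * Htilde τ (μ τ) ≤
        α * Htilde 1 γ₁ + (1 - α) * Htilde 2 γ₂ := by
  obtain ⟨x, hx7, hx8, hxeq⟩ := exists_x
  have hx0 : (0:ℝ) < x := by linarith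
  have hx1 : x < 1 := by linarith
  set a : ℝ := -Real.logb 2 x with ha
  have ha0 : 0 ≤ a := by
    have := Real.logb_nonpos one_lt_two (le_of_lt hx0) (le_of_lt hx1)
    linarith
  have h1x : (0:ℝ) < 1 + x := by linarith
  have hZ2pos : (0:ℝ) < 1 + x + x^2 := by positivity
  set γ₁ : ℝ := x / (1 + x) with hγ₁def
  set γ₂ : ℝ := (x + 2*x^2) / (2*(1 + x + x^2)) with hγ₂def
  -- identities
  have hZ1id : (1 + x) * x^2 = 1 := by linear_combination hxeq
  have hZ2id : (1 + x + x^2) * x^3 = 1 := by linear_combination (x^2 + 1) * hxeq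
  have hlog1 : Real.logb 2 (1 + x) = 2 * a := by
    have h1 : (1 + x) = (x^2)⁻¹ := eq_inv_of_mul_eq_one_left hZ1id
    rw [h1, Real.logb_inv, Real.logb_pow]
    push_cast; ring
  have hlog2 : Real.logb 2 (1 + x + x^2) = 3 * a := by
    have h1 : (1 + x + x^2) = (x^3)⁻¹ := eq_inv_of_mul_eq_one_left hZ2id
    rw [h1, Real.logb_inv, Real.logb_pow]
    push_cast; ring
  -- γ bounds
  have hγ₁0 : 0 ≤ γ₁ := by positivity
  have hγ₁pos : 0 < γ₁ := div_pos hx0 h1x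
  have hγ₁h : γ₁ ≤ 1/2 := by
    rw [hγ₁def, div_le_iff₀ h1x]; linarith
  have hγ₂0 : 0 ≤ γ₂ := by positivity
  have hγ₂h : γ₂ ≤ 1/2 := by
    rw [hγ₂def, div_le_iff₀ (by positivity)]; nlinarith
  -- α
  have hDpos : 0 < γ₁ + (1/2 - γ₂) := by linarith
  set α : ℝ := (1/2 - γ₂) / (γ₁ + (1/2 - γ₂)) with hαdef
  have hα0 : 0 ≤ α := div_nonneg (by linarith) (le_of_lt hDpos)
  have hα1 : α ≤ 1 := by
    rw [hαdef, div_le_one hDpos]; linarith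
  have hαD : α * (γ₁ + (1/2 - γ₂)) = 1/2 - γ₂ :=
    div_mul_cancel₀ _ (ne_of_gt hDpos)
  -- lower bounds
  have hs1 : ∑ j ∈ Finset.range 2, x^j = 1 + x := by
    simp [Finset.sum_range_succ]
  have hmean1 : (1:ℝ) * γ₁ = ∑ i ∈ Finset.range 2,
      (i:ℝ) * (x^i / (∑ j ∈ Finset.range 2, x^j)) := by
    rw [hs1]
    simp [Finset.sum_range_succ, hγ₁def]
  have hH1 : a * (2 + γ₁) ≤ Htilde 1 γ₁ := by
    have h := htilde_ge 1 one_pos hx0 γ₁ (by push_cast; exact_mod_cast hmean1)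
    rw [hs1, hlog1] at h
    push_cast at h
    calc a * (2 + γ₁) = 1/(1:ℝ) * (2*a - 1*γ₁ * Real.logb 2 x) := by
          rw [ha]; ring
      _ ≤ Htilde 1 γ₁ := h
  have hs2 : ∑ j ∈ Finset.range 3, x^j = 1 + x + x^2 := by
    norm_num [Finset.sum_range_succ]
  have hmean2 : (2:ℝ) * γ₂ = ∑ i ∈ Finset.range 3,
      (i:ℝ) * (x^i / (∑ j ∈ Finset.range 3, x^j)) := by
    rw [hs2]
    simp only [Finset.sum_range_succ, Finset.sum_range_zero]
    push_cast
    rw [hγ₂def]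
    field_simp
    ring
  have hH2 : a * (3/2 + γ₂) ≤ Htilde 2 γ₂ := by
    have h := htilde_ge 2 two_pos hx0 γ₂ (by push_cast; exact_mod_cast hmean2)
    rw [hs2, hlog2] at h
    push_cast at h
    calc a * (3/2 + γ₂) = 1/(2:ℝ) * (3*a - 2*γ₂ * Real.logb 2 x) := by
          rw [ha]; ring
      _ ≤ Htilde 2 γ₂ := h
  -- upper bound on LHS
  have hub : ∀ τ ∈ Finset.Icc 1 n, π τ * Htilde τ (μ τ) ≤ π τ * (a * (μ τ + 1/(τ:ℝ) + 1)) := by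
    intro τ hτ
    have hτ1 : 1 ≤ τ := (Finset.mem_Icc.1 hτ).1
    obtain ⟨hμ0, hμh⟩ := hμ τ hτ
    apply mul_le_mul_of_nonneg_left _ (hπ τ hτ)
    have h := htilde_le τ hτ1 (μ τ) hμ0 (by linarith) hx0 (le_of_lt hx1)
      (keyZ τ hτ1 hx7 hx8 hxeq)
    calc Htilde τ (μ τ) ≤ (-Real.logb 2 x) * (μ τ + 1/(τ:ℝ) + 1) := h
      _ = a * (μ τ + 1/(τ:ℝ) + 1) := by rw [ha]
  have hLHS : ∑ τ ∈ Finset.Icc 1 n, π τ * Htilde τ (μ τ) ≤ 2 * a := by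
    calc ∑ τ ∈ Finset.Icc 1 n, π τ * Htilde τ (μ τ)
        ≤ ∑ τ ∈ Finset.Icc 1 n, π τ * (a * (μ τ + 1/(τ:ℝ) + 1)) :=
          Finset.sum_le_sum hub
      _ = a * (∑ τ ∈ Finset.Icc 1 n, π τ * (μ τ + 1/(τ:ℝ)))
          + a * (∑ τ ∈ Finset.Icc 1 n, π τ) := by
          rw [Finset.mul_sum, Finset.mul_sum, ← Finset.sum_add_distrib]
          exact Finset.sum_congr rfl (fun τ _ => by ring)
      _ = 2 * a := by rw [hconstr, hπsum]; ring
  -- RHS lower bound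
  have hmix : α * (a * (2 + γ₁)) + (1 - α) * (a * (3/2 + γ₂)) = 2 * a := by
    linear_combination a * hαD
  have hRHS : 2 * a ≤ α * Htilde 1 γ₁ + (1 - α) * Htilde 2 γ₂ := by
    have h1 := mul_le_mul_of_nonneg_left hH1 hα0
    have h2 := mul_le_mul_of_nonneg_left hH2 (by linarith : (0:ℝ) ≤ 1 - α)
    rw [← hmix]
    exact add_le_add h1 h2
  exact ⟨α, γ₁, γ₂, ⟨hα0, hα1⟩, ⟨hγ₁0, hγ₁h⟩, ⟨hγ₂0, hγ₂h⟩,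
    by linear_combination hαD, le_trans hLHS hRHS⟩
end

section
/- Let C := sup{ α·H̃(γ₁, 1) + (1−α)·H̃(γ₂, 1/2) : α ∈ [0,1], γ₁, γ₂ ∈ [0, 1/2], α·(γ₁ + 1) + (1−α)·(γ₂ + 1/2) = 1 }. Then 0.811 ≤ C ≤ 0.812. (The paper reports the value C = 0.8114 bits per time slot, attained near α = 0.177, γ₁ = 0.43, γ₂ = 0.407; this is the capacity of the covert queueing channel in a shared FCFS scheduler with service rate 1 serving two users.) -/
/-- The capacity of the covert queueing channel in a shared FCFS scheduler with
service rate 1 serving two users: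
`C = sup { α·H̃(γ₁,1) + (1−α)·H̃(γ₂,1/2) }` over `α ∈ [0,1]`, `γ₁,γ₂ ∈ [0,1/2]`
with `α(γ₁+1) + (1−α)(γ₂+1/2) = 1`. -/
noncomputable def twoUserCapacity : ℝ :=
  sSup { c : ℝ | ∃ α γ₁ γ₂ : ℝ,
    α ∈ Set.Icc (0 : ℝ) 1 ∧
    γ₁ ∈ Set.Icc (0 : ℝ) (1 / 2) ∧
    γ₂ ∈ Set.Icc (0 : ℝ) (1 / 2) ∧
    α * (γ₁ + 1) + (1 - α) * (γ₂ + 1 / 2) = 1 ∧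
    c = α * Htilde 1 γ₁ + (1 - α) * Htilde 2 γ₂ }

open Finset Real

lemma mul_logb_sub_mul_logb_le {b p q : ℝ} (hb : 1 < b) (hp : 0 ≤ p) (hq : 0 < q) :
    p * logb b q - p * logb b p ≤ (q - p) / log b := by
  rcases hp.eq_or_lt with rfl | hp
  · simpa using div_nonneg hq.le (log_pos hb).le
  rw [← mul_sub, ← logb_div hq.ne' hp.ne', logb, ← mul_div_assoc]
  refine div_le_div_of_nonneg_right ?_ (log_pos hb).le
  calc p * log (q / p) ≤ p * (q / p - 1) := by gcongr; exact log_le_sub_one_of_pos (by positivity)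
    _ = q - p := by field_simp

theorem sum_mul_logb_le_sum_mul_logb {ι : Type*} (s : Finset ι) {b : ℝ} {p q : ι → ℝ}
    (hb : 1 < b) (hp : ∀ i ∈ s, 0 ≤ p i) (hq : ∀ i ∈ s, 0 < q i)
    (hqp : ∑ i ∈ s, q i ≤ ∑ i ∈ s, p i) :
    ∑ i ∈ s, p i * logb b (q i) ≤ ∑ i ∈ s, p i * logb b (p i) := by
  have hsum := sum_le_sum fun i hi => mul_logb_sub_mul_logb_le hb (hp i hi) (hq i hi)
  rw [sum_sub_distrib, ← sum_div, sum_sub_distrib] at hsum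
  have : (∑ i ∈ s, q i - ∑ i ∈ s, p i) / log b ≤ 0 :=
    div_nonpos_of_nonpos_of_nonneg (by linarith) (log_pos hb).le
  linarith

lemma div_le_logb_of_pow_le {b a : ℝ} {m n : ℕ} (hb : 1 < b) (hn : 0 < n)
    (h : b ^ m ≤ a ^ n) : (m : ℝ) / n ≤ logb b a := by
  rw [div_le_iff₀ (by positivity), mul_comm, ← logb_pow]
  calc (m : ℝ) = logb b (b ^ m) := by rw [logb_pow, logb_self_eq_one hb, mul_one]
    _ ≤ logb b (a ^ n) := logb_le_logb_of_le hb (by positivity) h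

lemma logb_le_div_of_le_pow {b a : ℝ} {m n : ℕ} (hb : 1 < b) (ha : 0 < a) (hn : 0 < n)
    (h : a ^ n ≤ b ^ m) : logb b a ≤ m / n := by
  rw [le_div_iff₀ (by positivity), mul_comm, ← logb_pow]
  calc logb b (a ^ n) ≤ logb b (b ^ m) := logb_le_logb_of_le hb (by positivity) h
    _ = m := by rw [logb_pow, logb_self_eq_one hb, mul_one]

lemma logb_two_div_mem_Icc {p q m₁ m₂ n : ℕ} (hp : 0 < p) (hq : 0 < q) (hn : 0 < n)
    (h₁ : 2 ^ m₁ * q ^ n ≤ p ^ n) (h₂ : p ^ n ≤ 2 ^ m₂ * q ^ n) :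
    logb 2 ((p : ℝ) / q) ∈ Set.Icc ((m₁ : ℝ) / n) ((m₂ : ℝ) / n) := by
  have hq' : (0 : ℝ) < q := by exact_mod_cast hq
  constructor
  · refine div_le_logb_of_pow_le one_lt_two hn ?_
    rw [div_pow, le_div_iff₀ (by positivity)]
    exact_mod_cast h₁
  · refine logb_le_div_of_le_pow one_lt_two (by positivity) hn ?_
    rw [div_pow, div_le_iff₀ (by positivity)]
    exact_mod_cast h₂

noncomputable def tilted (k : ℕ) (x : ℝ) (i : ℕ) : ℝ :=
  x ^ i / ∑ j ∈ range (k + 1), x ^ j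

section Tilted

variable {k : ℕ} {x : ℝ}

lemma one_le_sum_range_pow (hx : 0 ≤ x) : 1 ≤ ∑ j ∈ range (k + 1), x ^ j := by
  rw [sum_range_succ', pow_zero, le_add_iff_nonneg_left]
  exact sum_nonneg fun j _ => pow_nonneg hx _

lemma tilted_pos (hx : 0 < x) (i : ℕ) : 0 < tilted k x i :=
  div_pos (pow_pos hx i) (by linarith [one_le_sum_range_pow (k := k) hx.le])

lemma sum_tilted (hx : 0 < x) : ∑ i ∈ range (k + 1), tilted k x i = 1 := by
  unfold tilted
  rw [← sum_div, div_self (by linarith [one_le_sum_range_pow (k := k) hx.le])]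

lemma logb_tilted (hx : 0 < x) (i : ℕ) :
    logb 2 (tilted k x i) = i * logb 2 x - logb 2 (∑ j ∈ range (k + 1), x ^ j) := by
  rw [tilted, logb_div (pow_pos hx i).ne' (by linarith [one_le_sum_range_pow (k := k) hx.le]),
    logb_pow]

lemma sum_mul_logb_tilted (hx : 0 < x) {p : ℕ → ℝ} (hp : ∑ i ∈ range (k + 1), p i = 1) :
    ∑ i ∈ range (k + 1), p i * logb 2 (tilted k x i) =
      logb 2 x * ∑ i ∈ range (k + 1), (i : ℝ) * p i - logb 2 (∑ j ∈ range (k + 1), x ^ j) := by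
  simp_rw [logb_tilted hx, mul_sub, sum_sub_distrib, ← sum_mul, hp, one_mul, mul_sum]
  congr 1
  exact sum_congr rfl fun i _ => by ring

lemma shannonEntropy_le {p : ℕ → ℝ} (hx : 0 < x) (hp : ∀ i ∈ range (k + 1), 0 ≤ p i)
    (hp1 : ∑ i ∈ range (k + 1), p i = 1) :
    shannonEntropy k p ≤
      logb 2 (∑ j ∈ range (k + 1), x ^ j) - logb 2 x * ∑ i ∈ range (k + 1), (i : ℝ) * p i := by
  have := sum_mul_logb_le_sum_mul_logb _ one_lt_two hp (fun i _ => tilted_pos hx i)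
    (by rw [sum_tilted hx, hp1])
  rw [sum_mul_logb_tilted hx hp1] at this
  rw [shannonEntropy]
  linarith

lemma shannonEntropy_tilted (hx : 0 < x) :
    shannonEntropy k (tilted k x) = logb 2 (∑ j ∈ range (k + 1), x ^ j) -
      logb 2 x * ∑ i ∈ range (k + 1), (i : ℝ) * tilted k x i := by
  rw [shannonEntropy, sum_mul_logb_tilted hx (sum_tilted hx)]
  ring

end Tilted

def entropiesWithMean (k : ℕ) (m : ℝ) : Set ℝ :=
  { h : ℝ | ∃ p : ℕ → ℝ,
    (∀ i ∈ range (k + 1), 0 ≤ p i) ∧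
    (∑ i ∈ range (k + 1), p i = 1) ∧
    (∑ i ∈ range (k + 1), (i : ℝ) * p i = m) ∧
    h = shannonEntropy k p }

lemma Htilde_eq (k : ℕ) (γ : ℝ) : Htilde k γ = 1 / k * sSup (entropiesWithMean k (k * γ)) := rfl

/-- The value at `x` of the dual function of the maximum-entropy problem defining `Htilde k γ`. -/
noncomputable def tiltBound (k : ℕ) (x γ : ℝ) : ℝ :=
  (logb 2 (∑ j ∈ range (k + 1), x ^ j) - logb 2 x * (k * γ)) / k

section Htilde

variable {k : ℕ} {x γ : ℝ}

lemma bddAbove_entropiesWithMean (k : ℕ) (m : ℝ) : BddAbove (entropiesWithMean k m) := by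
  refine ⟨logb 2 (∑ j ∈ range (k + 1), (1 : ℝ) ^ j), ?_⟩
  rintro _ ⟨p, hp, hp1, -, rfl⟩
  simpa using shannonEntropy_le one_pos hp hp1

lemma Htilde_le_tiltBound (hx0 : 0 < x) (hx1 : x ≤ 1) (hγ : 0 ≤ γ) :
    Htilde k γ ≤ tiltBound k x γ := by
  have hbound : 0 ≤ logb 2 (∑ j ∈ range (k + 1), x ^ j) - logb 2 x * (k * γ) := by
    have := logb_nonneg one_lt_two (one_le_sum_range_pow (k := k) hx0.le)
    have := logb_nonpos one_lt_two hx0.le hx1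
    nlinarith [mul_nonneg k.cast_nonneg hγ]
  rw [Htilde_eq, tiltBound, one_div_mul_eq_div]
  refine div_le_div_of_nonneg_right (Real.sSup_le ?_ hbound) k.cast_nonneg
  rintro _ ⟨p, hp, hp1, hmean, rfl⟩
  simpa [hmean] using shannonEntropy_le hx0 hp hp1

lemma tiltBound_le_Htilde (hx : 0 < x)
    (hγ : ∑ i ∈ range (k + 1), (i : ℝ) * tilted k x i = k * γ) :
    tiltBound k x γ ≤ Htilde k γ := by
  have hmem : shannonEntropy k (tilted k x) ∈ entropiesWithMean k (k * γ) :=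
    ⟨tilted k x, fun i _ => (tilted_pos hx i).le, sum_tilted hx, hγ, rfl⟩
  calc tiltBound k x γ = 1 / k * shannonEntropy k (tilted k x) := by
        rw [shannonEntropy_tilted hx, hγ, tiltBound, one_div_mul_eq_div]
    _ ≤ Htilde k γ :=
        mul_le_mul_of_nonneg_left (le_csSup (bddAbove_entropiesWithMean _ _) hmem) (by positivity)

end Htilde

def twoUserRates : Set ℝ :=
  { c : ℝ | ∃ α γ₁ γ₂ : ℝ,
    α ∈ Set.Icc (0 : ℝ) 1 ∧
    γ₁ ∈ Set.Icc (0 : ℝ) (1 / 2) ∧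
    γ₂ ∈ Set.Icc (0 : ℝ) (1 / 2) ∧
    α * (γ₁ + 1) + (1 - α) * (γ₂ + 1 / 2) = 1 ∧
    c = α * Htilde 1 γ₁ + (1 - α) * Htilde 2 γ₂ }

section Capacity

variable {x : ℝ}

lemma weighted_tiltBound_eq {α γ₁ γ₂ : ℝ} (hx : 0 < x)
    (h : α * (γ₁ + 1) + (1 - α) * (γ₂ + 1 / 2) = 1) :
    α * tiltBound 1 x γ₁ + (1 - α) * tiltBound 2 x γ₂ =
      α * logb 2 (1 + x) + (1 - α) * (logb 2 ((1 + x + x ^ 2) / x) / 2) := by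
  simp only [tiltBound, sum_range_succ, sum_range_zero, pow_zero, pow_one, zero_add]
  rw [logb_div (by positivity) hx.ne']
  push_cast
  linear_combination (-logb 2 x) * h

lemma le_max_of_mem_twoUserRates {c : ℝ} (hx0 : 0 < x) (hx1 : x ≤ 1) (hc : c ∈ twoUserRates) :
    c ≤ max (logb 2 (1 + x)) (logb 2 ((1 + x + x ^ 2) / x) / 2) := by
  obtain ⟨α, γ₁, γ₂, ⟨hα0, hα1⟩, ⟨hγ₁, -⟩, ⟨hγ₂, -⟩, h, rfl⟩ := hc
  calc α * Htilde 1 γ₁ + (1 - α) * Htilde 2 γ₂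
      ≤ α * tiltBound 1 x γ₁ + (1 - α) * tiltBound 2 x γ₂ := by
        have := sub_nonneg.2 hα1
        gcongr <;> exact Htilde_le_tiltBound hx0 hx1 ‹_›
    _ = _ := weighted_tiltBound_eq hx0 h
    _ ≤ _ := Convex.combo_le_max _ _ hα0 (sub_nonneg.2 hα1) (by ring)

lemma twoUserCapacity_le (hx0 : 0 < x) (hx1 : x ≤ 1) :
    twoUserCapacity ≤ max (logb 2 (1 + x)) (logb 2 ((1 + x + x ^ 2) / x) / 2) :=
  Real.sSup_le (fun _ => le_max_of_mem_twoUserRates hx0 hx1)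
    (le_max_of_le_left (logb_nonneg one_lt_two (by linarith)))

lemma exists_twoUser_weight {γ₁ γ₂ : ℝ} (hγ₁ : 0 < γ₁) (hγ₂ : γ₂ ≤ 1 / 2) :
    ∃ α ∈ Set.Icc (0 : ℝ) 1, α * (γ₁ + 1) + (1 - α) * (γ₂ + 1 / 2) = 1 := by
  have hden : 0 < 2 * γ₁ + (1 - 2 * γ₂) := by linarith
  refine ⟨(1 - 2 * γ₂) / (2 * γ₁ + (1 - 2 * γ₂)),
    ⟨div_nonneg (by linarith) hden.le, div_le_one_of_le₀ (by linarith) hden.le⟩, ?_⟩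
  field_simp
  ring

lemma min_le_twoUserCapacity (hx0 : 0 < x) (hx1 : x ≤ 1) :
    min (logb 2 (1 + x)) (logb 2 ((1 + x + x ^ 2) / x) / 2) ≤ twoUserCapacity := by
  set γ₁ := x / (1 + x) with hγ₁_def
  set γ₂ := (x + 2 * x ^ 2) / (2 * (1 + x + x ^ 2)) with hγ₂_def
  have hγ₁ : γ₁ ∈ Set.Icc (0 : ℝ) (1 / 2) :=
    ⟨by positivity, by rw [div_le_iff₀ (by positivity)]; linarith⟩
  have hγ₂ : γ₂ ∈ Set.Icc (0 : ℝ) (1 / 2) :=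
    ⟨by positivity, by rw [div_le_iff₀ (by positivity)]; nlinarith⟩
  have hmean₁ : ∑ i ∈ range (1 + 1), (i : ℝ) * tilted 1 x i = (1 : ℕ) * γ₁ := by
    simp [tilted, sum_range_succ, hγ₁_def]
  have hmean₂ : ∑ i ∈ range (2 + 1), (i : ℝ) * tilted 2 x i = (2 : ℕ) * γ₂ := by
    simp only [tilted, sum_range_succ, range_one, sum_singleton, pow_zero, pow_one,
      Nat.cast_zero, Nat.cast_one, Nat.cast_ofNat, zero_mul, one_mul, zero_add, hγ₂_def]
    field_simp
  obtain ⟨α, ⟨hα0, hα1⟩, h⟩ := exists_twoUser_weight (by positivity : 0 < γ₁) hγ₂.2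
  calc min (logb 2 (1 + x)) (logb 2 ((1 + x + x ^ 2) / x) / 2)
      ≤ α * logb 2 (1 + x) + (1 - α) * (logb 2 ((1 + x + x ^ 2) / x) / 2) :=
        Convex.min_le_combo _ _ hα0 (sub_nonneg.2 hα1) (by ring)
    _ = α * tiltBound 1 x γ₁ + (1 - α) * tiltBound 2 x γ₂ := (weighted_tiltBound_eq hx0 h).symm
    _ ≤ α * Htilde 1 γ₁ + (1 - α) * Htilde 2 γ₂ := by
        have := sub_nonneg.2 hα1
        gcongr
        exacts [tiltBound_le_Htilde hx0 hmean₁, tiltBound_le_Htilde hx0 hmean₂]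
    _ ≤ twoUserCapacity :=
        le_csSup ⟨_, fun _ => le_max_of_mem_twoUserRates hx0 hx1⟩
          ⟨α, γ₁, γ₂, ⟨hα0, hα1⟩, hγ₁, hγ₂, h, rfl⟩

end Capacity

/-- `0.811 ≤ C ≤ 0.812` (the paper reports `C = 0.8114` bits per
time slot, attained near `α = 0.177`, `γ₁ = 0.43`, `γ₂ = 0.407`). -/
theorem twoUserCapacity_bounds :
    (0.811 : ℝ) ≤ twoUserCapacity ∧ twoUserCapacity ≤ 0.812 := by
  have hA : logb 2 (351 / 200) ∈ Set.Icc (811 / 1000 : ℝ) (812 / 1000) :=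
    logb_two_div_mem_Icc (by norm_num) (by norm_num) (by norm_num) (by decide +kernel)
      (by decide +kernel)
  have hB : logb 2 (93001 / 30200) ∈ Set.Icc (1622 / 1000 : ℝ) (1624 / 1000) :=
    logb_two_div_mem_Icc (by norm_num) (by norm_num) (by norm_num) (by decide +kernel)
      (by decide +kernel)
  have hx : (1 + 151 / 200 : ℝ) = 351 / 200 ∧
      (1 + 151 / 200 + (151 / 200) ^ 2) / (151 / 200 : ℝ) = 93001 / 30200 := by norm_num
  constructor
  · calc (0.811 : ℝ) ≤ min (logb 2 (351 / 200)) (logb 2 (93001 / 30200) / 2) :=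
          le_min (by linarith [hA.1]) (by linarith [hB.1])
      _ ≤ twoUserCapacity := hx.1 ▸ hx.2 ▸ min_le_twoUserCapacity (by norm_num) (by norm_num)
  · calc twoUserCapacity ≤ max (logb 2 (351 / 200)) (logb 2 (93001 / 30200) / 2) :=
          hx.1 ▸ hx.2 ▸ twoUserCapacity_le (by norm_num) (by norm_num)
      _ ≤ 0.812 := max_le (by linarith [hA.2]) (by linarith [hB.2])
end
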